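/- arXiv:2007.12501 — 6 statements merged into one kernel-verified Lean document; each statement's English description precedes it below -/
import Mathlib

section
/- Let {(L_i, K_i)}_{i=1}^{M} be a finite family of pairs of subsets of S and let s0 ∈ S. Call a closed communicating class C of P φ-feasible if there exists an index i with C ∩ K_i ≠ ∅ and C ∩ L_i = ∅. Then μ_{s0}{ω : there exists i such that ω visits K_i infinitely often and visits L_i only finitely often} = ∑_{C φ-feasible} μ_{s0}{ω : ω reaches C}, where the sum ranges over the (finitely many) φ-feasible closed communicating classes. (This is the content of Theorem 1 of the paper: the probability of satisfying the Rabin acceptance condition equals the probability of reaching a φ-feasible recurrent set, recurrent classes of a finite Markov chain being its closed communicating classes.) -/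
open MeasureTheory Finset Set
open scoped Classical

/-- `μ` is the path measure of the time-homogeneous Markov chain with transition
matrix `P` started at `s0`: it assigns to each finite cylinder the product of
transition probabilities. -/
def IsPathMeasure {S : Type*} [Fintype S] [DecidableEq S] [MeasurableSpace S]
    (P : S → S → ℝ) (s0 : S) (μ : Measure (ℕ → S)) : Prop :=
  ∀ (n : ℕ) (f : ℕ → S),
    μ {ω | ∀ i ≤ n, ω i = f i} =
      if f 0 = s0 then ENNReal.ofReal (∏ i ∈ Finset.range n, P (f i) (f (i + 1))) else 0

/-- `s'` is accessible from `s`: some matrix power of `P` has positive `(s, s')` entry. -/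
def Accessible {S : Type*} [Fintype S] [DecidableEq S] (P : S → S → ℝ) (s s' : S) : Prop :=
  ∃ n : ℕ, 0 < ((Matrix.of P) ^ n) s s'

/-- `C` is a closed set of the chain: from any state of `C`, the chain stays in `C`. -/
def IsClosedSet {S : Type*} [Fintype S] (P : S → S → ℝ) (C : Set S) : Prop :=
  ∀ s ∈ C, ∑ s' ∈ Finset.univ.filter (· ∈ C), P s s' = 1

/-- A closed communicating class: a nonempty closed set all of whose states
communicate with each other. -/
def IsCCC {S : Type*} [Fintype S] [DecidableEq S] (P : S → S → ℝ) (C : Set S) : Prop :=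
  C.Nonempty ∧ IsClosedSet P C ∧ ∀ s ∈ C, ∀ s' ∈ C, Accessible P s s'

open scoped ENNReal
open Filter Function Preorder

/-!
Almost every trajectory makes only transitions of positive probability and, whenever
`0 < P u v`, visits `v` infinitely often if it visits `u` infinitely often (Markov property and
Borel–Cantelli). For such a trajectory the set of states it visits infinitely often is closed
under positive transitions, hence a closed communicating class, and it coincides with every
closed communicating class the trajectory enters. Rabin acceptance only depends on that set, so
up to a null set the Rabin event is the disjoint union of the events of reaching the φ-feasible
classes.
-/

section Chain

variable {S : Type*} [Fintype S] {P : S → S → ℝ}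

theorem isClosedSet_iff (hP0 : ∀ s s', 0 ≤ P s s') (hP1 : ∀ s, ∑ s', P s s' = 1) {C : Set S} :
    IsClosedSet P C ↔ ∀ s ∈ C, ∀ t, 0 < P s t → t ∈ C := by
  refine forall₂_congr fun s _ => ?_
  have hsplit := Finset.sum_filter_add_sum_filter_not univ (· ∈ C) (P s)
  rw [hP1 s] at hsplit
  calc ∑ t ∈ univ.filter (· ∈ C), P s t = 1
      ↔ ∑ t ∈ univ.filter (· ∉ C), P s t = 0 := by constructor <;> intro h <;> linarith
    _ ↔ ∀ t ∉ C, P s t = 0 := by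
      rw [Finset.sum_eq_zero_iff_of_nonneg fun t _ => hP0 s t]
      simp
    _ ↔ ∀ t, 0 < P s t → t ∈ C := by
      refine forall_congr' fun t => ?_
      rw [not_imp_comm, (hP0 s t).lt_iff_ne']

variable [DecidableEq S]

theorem Accessible.refl (s : S) : Accessible P s s :=
  ⟨0, by simp⟩

theorem Accessible.trans_pos (hP0 : ∀ s s', 0 ≤ P s s') {s t u : S} (hst : Accessible P s t)
    (htu : 0 < P t u) : Accessible P s u := by
  obtain ⟨k, hk⟩ := hst
  refine ⟨k + 1, ?_⟩
  rw [pow_succ, Matrix.mul_apply]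
  exact (Finset.sum_pos_iff_of_nonneg fun x _ =>
    mul_nonneg (Matrix.pow_apply_nonneg (A := Matrix.of P) hP0 k s x) (hP0 x u)).2
      ⟨t, mem_univ t, mul_pos hk htu⟩

theorem Accessible.mem_of_forall_pos_mem (hP0 : ∀ s s', 0 ≤ P s s') {T : Set S}
    (hT : ∀ u ∈ T, ∀ v, 0 < P u v → v ∈ T) {s t : S} (hst : Accessible P s t) (hs : s ∈ T) :
    t ∈ T := by
  obtain ⟨k, hk⟩ := hst
  induction k generalizing t with
  | zero =>
    rcases eq_or_ne s t with rfl | hne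
    · exact hs
    · simp [hne] at hk
  | succ k ih =>
    rw [pow_succ, Matrix.mul_apply] at hk
    obtain ⟨y, -, hy⟩ := (Finset.sum_pos_iff_of_nonneg fun x _ =>
      mul_nonneg (Matrix.pow_apply_nonneg (A := Matrix.of P) hP0 k s x) (hP0 x t)).1 hk
    exact hT y (ih (pos_of_mul_pos_left hy (hP0 y t))) t
      (pos_of_mul_pos_right hy (Matrix.pow_apply_nonneg (A := Matrix.of P) hP0 k s y))

theorem accessible_of_pos_steps (hP0 : ∀ s s', 0 ≤ P s s') {ω : ℕ → S}
    (hω : ∀ n, 0 < P (ω n) (ω (n + 1))) {m n : ℕ} (hmn : m ≤ n) : Accessible P (ω m) (ω n) := by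
  induction n, hmn using Nat.le_induction with
  | base => exact Accessible.refl _
  | succ n _ ih => exact ih.trans_pos hP0 (hω n)

end Chain

section Paths

variable {S : Type*} {ω : ℕ → S}

def infinitelyVisited (ω : ℕ → S) : Set S := {s | {n | ω n = s}.Infinite}

theorem infinite_setOf_mem_iff [Finite S] (A : Set S) :
    {n | ω n ∈ A}.Infinite ↔ (infinitelyVisited ω ∩ A).Nonempty := by
  refine ⟨fun h => ?_, fun ⟨s, hs, hsA⟩ => hs.mono fun n (hn : ω n = s) => ?_⟩
  · by_contra hempty
    have hfin : (⋃ s ∈ A, {n | ω n = s}).Finite :=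
      A.toFinite.biUnion fun s hs => not_infinite.1 fun hs' => hempty ⟨s, hs', hs⟩
    exact h (hfin.subset fun n hn => mem_biUnion hn (show ω n = ω n from rfl))
  · show ω n ∈ A
    rwa [hn]

theorem finite_setOf_mem_iff [Finite S] (A : Set S) :
    {n | ω n ∈ A}.Finite ↔ infinitelyVisited ω ∩ A = ∅ := by
  rw [← not_infinite, infinite_setOf_mem_iff, Set.not_nonempty_iff_eq_empty]

variable [Fintype S] [DecidableEq S] {P : S → S → ℝ}

theorem isCCC_infinitelyVisited (hP0 : ∀ s s', 0 ≤ P s s') (hP1 : ∀ s, ∑ s', P s s' = 1)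
    (hstep : ∀ n, 0 < P (ω n) (ω (n + 1)))
    (hio : ∀ u ∈ infinitelyVisited ω, ∀ v, 0 < P u v → v ∈ infinitelyVisited ω) :
    IsCCC P (infinitelyVisited ω) := by
  refine ⟨?_, (isClosedSet_iff hP0 hP1).2 hio, fun s hs t ht => ?_⟩
  · simpa using (infinite_setOf_mem_iff (ω := ω) univ).1 (by simpa using Set.infinite_univ)
  · obtain ⟨m, rfl⟩ := hs.nonempty
    obtain ⟨n, rfl, hmn⟩ := ht.exists_gt m
    exact accessible_of_pos_steps hP0 hstep hmn.le

theorem infinitelyVisited_eq_of_mem (hP0 : ∀ s s', 0 ≤ P s s') (hP1 : ∀ s, ∑ s', P s s' = 1)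
    (hstep : ∀ n, 0 < P (ω n) (ω (n + 1)))
    (hio : ∀ u ∈ infinitelyVisited ω, ∀ v, 0 < P u v → v ∈ infinitelyVisited ω)
    {C : Set S} (hC : IsCCC P C) {n : ℕ} (hn : ω n ∈ C) : infinitelyVisited ω = C := by
  have hstay : ∀ m, n ≤ m → ω m ∈ C := fun m hnm =>
    (accessible_of_pos_steps hP0 hstep hnm).mem_of_forall_pos_mem hP0
      ((isClosedSet_iff hP0 hP1).1 hC.2.1) hn
  have hsub : infinitelyVisited ω ⊆ C := fun s hs => by
    obtain ⟨m, rfl, hnm⟩ := hs.exists_gt n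
    exact hstay m hnm.le
  obtain ⟨s, hs⟩ := (isCCC_infinitelyVisited hP0 hP1 hstep hio).1
  exact hsub.antisymm fun t ht => (hC.2.2 s (hsub hs) t ht).mem_of_forall_pos_mem hP0 hio hs

theorem exists_mem_iff_infinitelyVisited_eq (hP0 : ∀ s s', 0 ≤ P s s')
    (hP1 : ∀ s, ∑ s', P s s' = 1) (hstep : ∀ n, 0 < P (ω n) (ω (n + 1)))
    (hio : ∀ u ∈ infinitelyVisited ω, ∀ v, 0 < P u v → v ∈ infinitelyVisited ω)
    {C : Set S} (hC : IsCCC P C) : (∃ n, ω n ∈ C) ↔ infinitelyVisited ω = C := by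
  refine ⟨fun ⟨n, hn⟩ => infinitelyVisited_eq_of_mem hP0 hP1 hstep hio hC hn, ?_⟩
  rintro rfl
  obtain ⟨s, hs⟩ := hC.1
  obtain ⟨n, hn⟩ := hs.nonempty
  exact ⟨n, (hn : ω n = s) ▸ hs⟩

end Paths

section Restriction

variable {ι : Type*} [Preorder ι] [LocallyFiniteOrderBot ι] {α : ι → Type*}
  {A : Set (Π i, α i)} {a : ι}

theorem preimage_frestrictLe_image (hA : DependsOn (· ∈ A) (Set.Iic a)) :
    frestrictLe a ⁻¹' (frestrictLe a '' A) = A := by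
  refine Subset.antisymm (fun ω ⟨ω', hω', h⟩ => ?_) (subset_preimage_image _ _)
  have : (ω' ∈ A) = (ω ∈ A) := hA fun i hi => congrFun h ⟨i, Finset.mem_Iic.2 hi⟩
  exact this ▸ hω'

theorem measurableSet_of_dependsOn [∀ i, MeasurableSpace (α i)]
    [∀ i, MeasurableSingletonClass (α i)] [∀ i, Finite (α i)]
    (hA : DependsOn (· ∈ A) (Set.Iic a)) : MeasurableSet A := by
  rw [← preimage_frestrictLe_image hA]
  exact measurable_frestrictLe a (Set.toFinite _).measurableSet

end Restriction

section PathMeasure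

variable {S : Type*} [MeasurableSpace S] [Fintype S] [DecidableEq S]
  {P : S → S → ℝ} {s0 : S} {μ : Measure (ℕ → S)}

theorem IsPathMeasure.measure_cylinder_inter_eval_succ (hμ : IsPathMeasure P s0 μ)
    (hP0 : ∀ s s', 0 ≤ P s s') (n : ℕ) (f : ℕ → S) (t : S) :
    μ ({ω | ∀ i ≤ n, ω i = f i} ∩ {ω | ω (n + 1) = t}) =
      μ {ω | ∀ i ≤ n, ω i = f i} * ENNReal.ofReal (P (f n) t) := by
  set g := Function.update f (n + 1) t
  have hg : ∀ i ≤ n, g i = f i := fun i hi => Function.update_of_ne (by omega) _ _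
  have hset : {ω : ℕ → S | ∀ i ≤ n, ω i = f i} ∩ {ω | ω (n + 1) = t} =
      {ω | ∀ i ≤ n + 1, ω i = g i} := by
    ext ω
    have hgt : g (n + 1) = t := Function.update_self ..
    simp only [mem_inter_iff, Nat.le_succ_iff, or_imp, forall_and, forall_eq, hgt]
    exact and_congr_left' (forall₂_congr fun i hi => by rw [hg i hi])
  have hprod : ∏ i ∈ range n, P (g i) (g (i + 1)) = ∏ i ∈ range n, P (f i) (f (i + 1)) :=
    prod_congr rfl fun i hi => by
      rw [Finset.mem_range] at hi
      rw [hg i hi.le, hg (i + 1) hi]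
  rw [hset, hμ, hμ, hg 0 n.zero_le, prod_range_succ, hprod, hg n le_rfl]
  simp only [g, Function.update_self]
  split_ifs
  · rw [ENNReal.ofReal_mul (prod_nonneg fun i _ => hP0 _ _)]
  · rw [zero_mul]

variable [MeasurableSingletonClass S]

theorem IsPathMeasure.measure_inter_eval_succ (hμ : IsPathMeasure P s0 μ)
    (hP0 : ∀ s s', 0 ≤ P s s') {n : ℕ} {A : Set (ℕ → S)} (hA : DependsOn (· ∈ A) (Set.Iic n))
    {u : S} (hu : ∀ ω ∈ A, ω n = u) (t : S) :
    μ (A ∩ {ω | ω (n + 1) = t}) = μ A * ENNReal.ofReal (P u t) := by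
  have hfiber : ∀ w, MeasurableSet (frestrictLe n ⁻¹' {w} : Set (ℕ → S)) :=
    fun w => measurable_frestrictLe n (measurableSet_singleton w)
  have hcyl : ∀ f : ℕ → S,
      frestrictLe (π := fun _ => S) n ⁻¹' {frestrictLe n f} = {ω | ∀ i ≤ n, ω i = f i} := by
    intro f
    ext ω
    simp [funext_iff]
  -- `A` is the disjoint union of the cylinders of length `n + 1` it contains.
  set W := (Set.toFinite (frestrictLe n '' A)).toFinset
  have hAW : A = frestrictLe n ⁻¹' W := by simp [W, preimage_frestrictLe_image hA]
  rw [hAW, ← Measure.restrict_apply (measurable_frestrictLe n W.measurableSet),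
    ← sum_measure_preimage_singleton W fun w _ => hfiber w,
    ← sum_measure_preimage_singleton W fun w _ => hfiber w, sum_mul]
  refine sum_congr rfl fun w hw => ?_
  obtain ⟨f, hf, rfl⟩ : w ∈ frestrictLe n '' A := by simpa [W] using hw
  rw [Measure.restrict_apply (hfiber _), hcyl, hμ.measure_cylinder_inter_eval_succ hP0,
    hu f hf]

theorem IsPathMeasure.ae_pos_transition (hμ : IsPathMeasure P s0 μ) (hP0 : ∀ s s', 0 ≤ P s s') :
    ∀ᵐ ω ∂μ, ∀ n, 0 < P (ω n) (ω (n + 1)) := by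
  refine ae_all_iff.2 fun n => ?_
  have hpair : ∀ s t, ∀ᵐ ω ∂μ, ω n = s → ω (n + 1) = t → 0 < P s t := fun s t => by
    rcases (hP0 s t).lt_or_eq with hst | hst
    · exact .of_forall fun _ _ _ => hst
    have hA : DependsOn (· ∈ {ω : ℕ → S | ω n = s}) (Set.Iic n) := fun x y h => by
      show (x n = s) = (y n = s)
      rw [h n (Set.mem_Iic.2 le_rfl)]
    have hnull : μ ({ω | ω n = s} ∩ {ω | ω (n + 1) = t}) = 0 := by
      rw [hμ.measure_inter_eval_succ hP0 hA (fun ω hω => hω), ← hst, ENNReal.ofReal_zero,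
        mul_zero]
    filter_upwards [measure_eq_zero_iff_ae_notMem.1 hnull] with ω hω hs ht
    exact absurd ⟨hs, ht⟩ hω
  filter_upwards [ae_all_iff.2 fun s => ae_all_iff.2 (hpair s)] with ω hω
  exact hω _ _ rfl rfl

theorem IsPathMeasure.tsum_measure_visit_avoiding_ne_top [IsFiniteMeasure μ]
    (hμ : IsPathMeasure P s0 μ) (hP0 : ∀ s s', 0 ≤ P s s') {u v : S} (huv : 0 < P u v) (N : ℕ) :
    ∑' m, μ {ω | N ≤ m ∧ ω m = u ∧ ∀ j ∈ Set.Icc N m, ω j ≠ v} ≠ ∞ := by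
  set R : ℕ → Set (ℕ → S) := fun m => {ω | N ≤ m ∧ ω m = u ∧ ∀ j ∈ Set.Icc N m, ω j ≠ v}
  -- The events `R m ∩ {ω (m + 1) = v}` are pairwise disjoint (the first one to occur ends every
  -- later `R m'`) and, by the Markov property, of measure `P u v * μ (R m)`.
  have hR : ∀ m, DependsOn (· ∈ R m) (Set.Iic m) := fun m x y h => by
    have hxy : ∀ j ∈ Set.Icc N m, x j = y j := fun j hj => h j hj.2
    show (N ≤ m ∧ x m = u ∧ ∀ j ∈ Set.Icc N m, x j ≠ v) =
      (N ≤ m ∧ y m = u ∧ ∀ j ∈ Set.Icc N m, y j ≠ v)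
    simp (contextual := true) only [hxy, h m (Set.mem_Iic.2 le_rfl)]
  have hdisj : Pairwise (Disjoint on fun m => R m ∩ {ω | ω (m + 1) = v}) := by
    refine (pairwise_disjoint_on _).2 fun m m' hmm' => Set.disjoint_left.2 ?_
    rintro ω ⟨⟨hNm, -, -⟩, hv⟩ ⟨⟨-, -, hv'⟩, -⟩
    exact hv' (m + 1) ⟨by omega, hmm'⟩ hv
  have hmeas : ∀ m, MeasurableSet (R m ∩ {ω | ω (m + 1) = v}) := fun m =>
    (measurableSet_of_dependsOn (hR m)).inter
      (measurableSet_singleton v |>.preimage (measurable_pi_apply (X := fun _ => S) (m + 1)))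
  have hbound : ENNReal.ofReal (P u v) * ∑' m, μ (R m) ≤ μ univ := calc
    ENNReal.ofReal (P u v) * ∑' m, μ (R m) = ∑' m, μ (R m ∩ {ω | ω (m + 1) = v}) := by
      rw [← ENNReal.tsum_mul_left]
      exact tsum_congr fun m => by
        rw [hμ.measure_inter_eval_succ hP0 (hR m) (fun ω hω => hω.2.1), mul_comm]
    _ = μ (⋃ m, R m ∩ {ω | ω (m + 1) = v}) := (measure_iUnion hdisj hmeas).symm
    _ ≤ μ univ := measure_mono (subset_univ _)
  intro htop
  rw [htop, ENNReal.mul_top (by simpa using huv)] at hbound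
  exact measure_ne_top μ univ (top_le_iff.1 hbound)

theorem IsPathMeasure.ae_mem_infinitelyVisited_of_pos [IsFiniteMeasure μ]
    (hμ : IsPathMeasure P s0 μ) (hP0 : ∀ s s', 0 ≤ P s s') {u v : S} (huv : 0 < P u v) :
    ∀ᵐ ω ∂μ, u ∈ infinitelyVisited ω → v ∈ infinitelyVisited ω := by
  have hN : ∀ N, ∀ᵐ ω ∂μ, u ∈ infinitelyVisited ω → ∃ n ≥ N, ω n = v := fun N => by
    filter_upwards [measure_eq_zero_iff_ae_notMem.1
      (measure_limsup_cofinite_eq_zero (hμ.tsum_measure_visit_avoiding_ne_top hP0 huv N))]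
      with ω hω hu
    by_contra! hv
    refine hω ?_
    rw [cofinite.limsup_set_eq]
    exact (hu.sdiff (finite_lt_nat N)).mono fun m hm =>
      ⟨not_lt.1 hm.2, hm.1, fun j hj => hv j hj.1⟩
  filter_upwards [ae_all_iff.2 hN] with ω hω hu
  by_contra hv
  obtain ⟨N, hN⟩ := (not_infinite.1 hv).bddAbove
  obtain ⟨n, hn, hnv⟩ := hω (N + 1) hu
  exact absurd (hN hnv) (by omega)

theorem IsPathMeasure.ae_infinitelyVisited_closed [IsFiniteMeasure μ]
    (hμ : IsPathMeasure P s0 μ) (hP0 : ∀ s s', 0 ≤ P s s') :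
    ∀ᵐ ω ∂μ, ∀ u ∈ infinitelyVisited ω, ∀ v, 0 < P u v → v ∈ infinitelyVisited ω := by
  have hpair : ∀ u v, ∀ᵐ ω ∂μ, 0 < P u v → u ∈ infinitelyVisited ω → v ∈ infinitelyVisited ω :=
    fun u v => by
      by_cases huv : 0 < P u v
      · filter_upwards [hμ.ae_mem_infinitelyVisited_of_pos hP0 huv] with ω h _ using h
      · exact .of_forall fun _ h => absurd h huv
  filter_upwards [ae_all_iff.2 fun u => ae_all_iff.2 (hpair u)] with ω hω u hu v huv
  exact hω u v huv hu

end PathMeasure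

theorem rabin_sat_prob_eq_sum_reach_phi_feasible_general
    {S : Type*} [Fintype S] [DecidableEq S]
    [MeasurableSpace S] [MeasurableSingletonClass S]
    (P : S → S → ℝ) (hP0 : ∀ s s', 0 ≤ P s s') (hP1 : ∀ s, ∑ s', P s s' = 1)
    {I : Type*} (L K : I → Set S) (s0 : S)
    (μ : Measure (ℕ → S)) [IsProbabilityMeasure μ]
    (hμ : IsPathMeasure P s0 μ) :
    μ {ω | ∃ i, {n | ω n ∈ K i}.Infinite ∧ {n | ω n ∈ L i}.Finite} =
      ∑' C : {C : Set S // IsCCC P C ∧ ∃ i, (C ∩ K i).Nonempty ∧ C ∩ L i = ∅},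
        μ {ω | ∃ n, ω n ∈ (C : Set S)} := by
  set Feasible := {C : Set S // IsCCC P C ∧ ∃ i, (C ∩ K i).Nonempty ∧ C ∩ L i = ∅}
  have htypical := (hμ.ae_pos_transition hP0).and (hμ.ae_infinitelyVisited_closed hP0)
  have hreach : ∀ᵐ ω ∂μ, ∀ C : Feasible, (∃ n, ω n ∈ (C : Set S)) ↔ infinitelyVisited ω = C := by
    filter_upwards [htypical] with ω ⟨hstep, hio⟩ C
    exact exists_mem_iff_infinitelyVisited_eq hP0 hP1 hstep hio C.2.1
  have hrabin : ∀ᵐ ω ∂μ, (∃ i, {n | ω n ∈ K i}.Infinite ∧ {n | ω n ∈ L i}.Finite) ↔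
      ∃ C : Feasible, ∃ n, ω n ∈ (C : Set S) := by
    filter_upwards [htypical, hreach] with ω ⟨hstep, hio⟩ hω
    simp only [infinite_setOf_mem_iff, finite_setOf_mem_iff, hω]
    exact ⟨fun h => ⟨⟨_, isCCC_infinitelyVisited hP0 hP1 hstep hio, h⟩, rfl⟩,
      fun ⟨C, hC⟩ => hC ▸ C.2.2⟩
  calc μ {ω | ∃ i, {n | ω n ∈ K i}.Infinite ∧ {n | ω n ∈ L i}.Finite}
      = μ (⋃ C : Feasible, {ω | ∃ n, ω n ∈ (C : Set S)}) :=
        measure_congr (eventuallyEq_set.2 (by simpa using hrabin))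
    _ = ∑' C : Feasible, μ {ω | ∃ n, ω n ∈ (C : Set S)} := by
      refine measure_iUnion₀ (fun C C' hCC' => ?_) fun C => ?_
      · refine measure_eq_zero_iff_ae_notMem.2 ?_
        filter_upwards [hreach] with ω hω ⟨hC, hC'⟩
        exact hCC' (Subtype.ext (((hω C).1 hC).symm.trans ((hω C').1 hC')))
      · rw [ofPred_exists]
        exact (MeasurableSet.iUnion fun n =>
          measurable_pi_apply (X := fun _ => S) n C.1.toFinite.measurableSet).nullMeasurableSet

/-- Theorem 1: the probability of satisfying the Rabin acceptance condition
equals the probability of reaching a φ-feasible recurrent (closed communicating) class. -/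
theorem rabin_sat_prob_eq_sum_reach_phi_feasible
    {S : Type*} [Fintype S] [Nonempty S] [DecidableEq S]
    [MeasurableSpace S] [MeasurableSingletonClass S]
    (P : S → S → ℝ) (hP0 : ∀ s s', 0 ≤ P s s') (hP1 : ∀ s, ∑ s', P s s' = 1)
    {I : Type*} [Fintype I] (L K : I → Set S) (s0 : S)
    (μ : Measure (ℕ → S)) [IsProbabilityMeasure μ]
    (hμ : IsPathMeasure P s0 μ) :
    μ {ω | ∃ i, {n | ω n ∈ K i}.Infinite ∧ {n | ω n ∈ L i}.Finite} =
      ∑' C : {C : Set S // IsCCC P C ∧ ∃ i, (C ∩ K i).Nonempty ∧ C ∩ L i = ∅},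
        μ {ω | ∃ n, ω n ∈ (C : Set S)} :=
  rabin_sat_prob_eq_sum_reach_phi_feasible_general P hP0 hP1 L K s0 μ hμ
end

section
/- (Proposition 5, convergence of value iteration.) Let R ⊆ S be a target set and define the value-iteration sequence by V^1 s = 1 if s ∈ R and V^1 s = 0 otherwise, and for k ≥ 1: V^{k+1} s = 1 if s ∈ R, and V^{k+1} s = (T V^k) s if s ∉ R. Then for all k and s, V^k s ≤ V^{k+1} s and 0 ≤ V^k s ≤ 1; moreover there exists V : S → ℝ such that for every ε > 0 there is a K with max_{s ∈ S} |V^k s − V s| < ε for all k > K. -/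
open Finset

/-- The set of mixed strategies over a finite type `X`. -/
def Mixed (X : Type*) [Fintype X] : Set (X → ℝ) :=
  {p | (∀ x, 0 ≤ p x) ∧ ∑ x, p x = 1}

/-- The max–min Bellman operator: the defender maximizes and the adversary
minimizes over mixed strategies. -/
noncomputable def bellmanT {S D A : Type*} [Fintype S] [Fintype D] [Fintype A]
    (P : D → A → S → S → ℝ) (V : S → ℝ) : S → ℝ := fun s =>
  ⨆ μ : ↥(Mixed D), ⨅ ν : ↥(Mixed A),
    ∑ d, ∑ a, ∑ s', (μ : D → ℝ) d * (ν : A → ℝ) a * P d a s s' * V s'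

/-- The Bellman backup operator for a fixed stationary defender policy `π`,
with the adversary best-responding (minimizing) over mixed strategies. -/
noncomputable def bellmanPol {S D A : Type*} [Fintype S] [Fintype D] [Fintype A]
    (P : D → A → S → S → ℝ) (π : S → D → ℝ) (V : S → ℝ) : S → ℝ := fun s =>
  ⨅ ν : ↥(Mixed A),
    ∑ d, ∑ a, ∑ s', π s d * (ν : A → ℝ) a * P d a s s' * V s'
instance mixedNonempty (X : Type*) [Fintype X] [Nonempty X] : Nonempty ↥(Mixed X) := by
  refine ⟨⟨fun _ => (Fintype.card X : ℝ)⁻¹, fun x => by positivity, ?_⟩⟩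
  rw [Finset.sum_const, nsmul_eq_mul]
  rw [Finset.card_univ, mul_inv_cancel₀]
  exact_mod_cast Fintype.card_ne_zero

section
variable {S D A : Type*} [Fintype S] [Fintype D] [Fintype A]

lemma weight_one (P : D → A → S → S → ℝ) (hP1 : ∀ d a s, ∑ s', P d a s s' = 1)
    (μ : D → ℝ) (hμ : ∑ d, μ d = 1) (ν : A → ℝ) (hν : ∑ a, ν a = 1) (s : S) :
    ∑ d, ∑ a, ∑ s', μ d * ν a * P d a s s' = 1 := by
  have h1 : ∀ d a, ∑ s', μ d * ν a * P d a s s' = μ d * ν a := fun d a => by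
    rw [← Finset.mul_sum, hP1, mul_one]
  simp only [h1, ← Finset.mul_sum, ← Finset.sum_mul, hμ, hν, one_mul]
end

section
variable {S D A : Type*} [Fintype S] [Fintype D] [Fintype A]
variable (P : D → A → S → S → ℝ)

lemma sum_mono (hP0 : ∀ d a s s', 0 ≤ P d a s s') {V W : S → ℝ} (hVW : ∀ s, V s ≤ W s)
    (μ : ↥(Mixed D)) (ν : ↥(Mixed A)) (s : S) :
    ∑ d, ∑ a, ∑ s', (μ : D → ℝ) d * (ν : A → ℝ) a * P d a s s' * V s'
      ≤ ∑ d, ∑ a, ∑ s', (μ : D → ℝ) d * (ν : A → ℝ) a * P d a s s' * W s' := by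
  refine Finset.sum_le_sum fun d _ => Finset.sum_le_sum fun a _ => Finset.sum_le_sum fun s' _ => ?_
  have h0 : 0 ≤ (μ : D → ℝ) d * (ν : A → ℝ) a * P d a s s' :=
    mul_nonneg (mul_nonneg (μ.2.1 d) (ν.2.1 a)) (hP0 d a s s')
  exact mul_le_mul_of_nonneg_left (hVW s') h0

lemma sum_bounds (hP0 : ∀ d a s s', 0 ≤ P d a s s') (hP1 : ∀ d a s, ∑ s', P d a s s' = 1)
    {V : S → ℝ} {lo hi : ℝ} (hlo : ∀ s, lo ≤ V s) (hhi : ∀ s, V s ≤ hi)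
    (μ : ↥(Mixed D)) (ν : ↥(Mixed A)) (s : S) :
    lo ≤ (∑ d, ∑ a, ∑ s', (μ : D → ℝ) d * (ν : A → ℝ) a * P d a s s' * V s') ∧
    (∑ d, ∑ a, ∑ s', (μ : D → ℝ) d * (ν : A → ℝ) a * P d a s s' * V s') ≤ hi := by
  have hw := weight_one P hP1 (μ : D → ℝ) μ.2.2 (ν : A → ℝ) ν.2.2 s
  have hconst : ∀ c : ℝ,
      ∑ d, ∑ a, ∑ s', (μ : D → ℝ) d * (ν : A → ℝ) a * P d a s s' * c = c := by
    intro c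
    simp only [← Finset.sum_mul, hw, one_mul]
  constructor
  · calc lo = _ := (hconst lo).symm
      _ ≤ _ := sum_mono P hP0 hlo μ ν s
  · calc _ ≤ _ := sum_mono P hP0 hhi μ ν s
      _ = hi := hconst hi

lemma inner_bddBelow {V : S → ℝ} {lo hi : ℝ}
    (hP0 : ∀ d a s s', 0 ≤ P d a s s') (hP1 : ∀ d a s, ∑ s', P d a s s' = 1)
    (hlo : ∀ s, lo ≤ V s) (hhi : ∀ s, V s ≤ hi) (μ : ↥(Mixed D)) (s : S) :
    BddBelow (Set.range fun ν : ↥(Mixed A) =>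
      ∑ d, ∑ a, ∑ s', (μ : D → ℝ) d * (ν : A → ℝ) a * P d a s s' * V s') := by
  refine ⟨lo, ?_⟩
  rintro x ⟨ν, rfl⟩
  exact (sum_bounds P hP0 hP1 hlo hhi μ ν s).1

lemma bellmanT_bounds [Nonempty D] [Nonempty A]
    (hP0 : ∀ d a s s', 0 ≤ P d a s s') (hP1 : ∀ d a s, ∑ s', P d a s s' = 1)
    {V : S → ℝ} {lo hi : ℝ} (hlo : ∀ s, lo ≤ V s) (hhi : ∀ s, V s ≤ hi) (s : S) :
    lo ≤ bellmanT P V s ∧ bellmanT P V s ≤ hi := by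
  have hG : ∀ μ : ↥(Mixed D),
      lo ≤ (⨅ ν : ↥(Mixed A), ∑ d, ∑ a, ∑ s',
        (μ : D → ℝ) d * (ν : A → ℝ) a * P d a s s' * V s') ∧
      (⨅ ν : ↥(Mixed A), ∑ d, ∑ a, ∑ s',
        (μ : D → ℝ) d * (ν : A → ℝ) a * P d a s s' * V s') ≤ hi := by
    intro μ
    constructor
    · exact le_ciInf fun ν => (sum_bounds P hP0 hP1 hlo hhi μ ν s).1
    · exact (ciInf_le (inner_bddBelow P hP0 hP1 hlo hhi μ s) (Classical.arbitrary _)).trans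
        ((sum_bounds P hP0 hP1 hlo hhi μ _ s).2)
  unfold bellmanT
  constructor
  · obtain ⟨μ0⟩ := (inferInstance : Nonempty ↥(Mixed D))
    refine le_trans (hG μ0).1 (le_ciSup (f := fun μ : ↥(Mixed D) =>
      ⨅ ν : ↥(Mixed A), ∑ d, ∑ a, ∑ s',
        (μ : D → ℝ) d * (ν : A → ℝ) a * P d a s s' * V s') ⟨hi, ?_⟩ μ0)
    rintro x ⟨μ, rfl⟩
    exact (hG μ).2
  · exact ciSup_le fun μ => (hG μ).2

lemma bellmanT_mono [Nonempty D] [Nonempty A]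
    (hP0 : ∀ d a s s', 0 ≤ P d a s s') (hP1 : ∀ d a s, ∑ s', P d a s s' = 1)
    {V W : S → ℝ} {lo hi : ℝ} (hlo : ∀ s, lo ≤ V s) (hWlo : ∀ s, lo ≤ W s)
    (hWhi : ∀ s, W s ≤ hi)
    (hVW : ∀ s, V s ≤ W s) (s : S) : bellmanT P V s ≤ bellmanT P W s := by
  refine ciSup_mono ⟨hi, ?_⟩ fun μ => ?_
  · rintro x ⟨μ, rfl⟩
    exact (ciInf_le (inner_bddBelow P hP0 hP1 hWlo hWhi μ s) (Classical.arbitrary _)).trans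
      ((sum_bounds P hP0 hP1 hWlo hWhi μ _ s).2)
  · exact ciInf_mono (inner_bddBelow P hP0 hP1 hlo (fun t => (hVW t).trans (hWhi t)) μ s)
      fun ν => sum_mono P hP0 hVW μ ν s
end

/-- Proposition 5: value iteration with absorbing target set `R` (value 1 on `R`,
Bellman backup elsewhere) produces a pointwise nondecreasing sequence in `[0,1]`
that converges uniformly to some value vector `V`. -/
theorem value_iteration_converges
    {S D A : Type*} [Fintype S] [Nonempty S] [Fintype D] [Nonempty D]
    [Fintype A] [Nonempty A]
    (P : D → A → S → S → ℝ)
    (hP0 : ∀ d a s s', 0 ≤ P d a s s') (hP1 : ∀ d a s, ∑ s', P d a s s' = 1)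
    (R : Set S) [DecidablePred (· ∈ R)]
    (V : ℕ → S → ℝ)
    (hV1 : ∀ s, V 1 s = if s ∈ R then 1 else 0)
    (hVrec : ∀ k ≥ 1, ∀ s, V (k + 1) s = if s ∈ R then 1 else bellmanT P (V k) s) :
    (∀ k ≥ 1, ∀ s, V k s ≤ V (k + 1) s ∧ 0 ≤ V k s ∧ V k s ≤ 1) ∧
    ∃ Vlim : S → ℝ, ∀ ε > (0 : ℝ), ∃ K : ℕ, ∀ k > K, ∀ s, |V k s - Vlim s| < ε := by
  -- bounds 0 ≤ V k ≤ 1 for k ≥ 1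
  have hbd : ∀ k, 1 ≤ k → ∀ s, 0 ≤ V k s ∧ V k s ≤ 1 := by
    intro k
    induction k with
    | zero => omega
    | succ n ih =>
      intro _ s
      rcases Nat.eq_or_lt_of_le (Nat.one_le_iff_ne_zero.mpr (Nat.succ_ne_zero n)) with h | h
      · rw [show n + 1 = 1 from h.symm, hV1]
        split <;> norm_num
      · have hn : 1 ≤ n := by omega
        rw [hVrec n hn]
        split
        · norm_num
        · exact bellmanT_bounds P hP0 hP1 (fun t => (ih hn t).1) (fun t => (ih hn t).2) s
  -- monotonicity
  have hmono : ∀ k, 1 ≤ k → ∀ s, V k s ≤ V (k + 1) s := by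
    intro k
    induction k with
    | zero => omega
    | succ n ih =>
      intro _ s
      rcases Nat.eq_or_lt_of_le (Nat.one_le_iff_ne_zero.mpr (Nat.succ_ne_zero n)) with h | h
      · rw [show n + 1 = 1 from h.symm] at *
        rw [hV1, hVrec 1 le_rfl]
        split
        · exact le_rfl
        · have := bellmanT_bounds P hP0 hP1 (V := V 1) (lo := 0) (hi := 1)
            (fun t => (hbd 1 le_rfl t).1) (fun t => (hbd 1 le_rfl t).2) s
          exact this.1
      · have hn : 1 ≤ n := by omega
        rw [hVrec n hn, hVrec (n + 1) (by omega)]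
        split
        · exact le_rfl
        · exact bellmanT_mono P hP0 hP1 (lo := 0) (hi := 1)
            (fun t => (hbd n hn t).1) (fun t => (hbd (n + 1) (by omega) t).1)
            (fun t => (hbd (n + 1) (by omega) t).2) (ih hn) s
  refine ⟨fun k hk s => ⟨hmono k hk s, (hbd k hk s).1, (hbd k hk s).2⟩, ?_⟩
  -- convergence
  set W : ℕ → S → ℝ := fun k s => V (k + 1) s with hW
  have hWmono : ∀ s, Monotone fun k => W k s := by
    intro s
    apply monotone_nat_of_le_succ
    intro n
    exact hmono (n + 1) (by omega) s
  have hWbdd : ∀ s, BddAbove (Set.range fun k => W k s) := by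
    intro s
    exact ⟨1, by rintro x ⟨k, rfl⟩; exact (hbd (k + 1) (by omega) s).2⟩
  set L : S → ℝ := fun s => ⨆ k, W k s with hL
  have htend : ∀ s, Filter.Tendsto (fun k => W k s) Filter.atTop (nhds (L s)) :=
    fun s => tendsto_atTop_ciSup (hWmono s) (hWbdd s)
  refine ⟨L, fun ε hε => ?_⟩
  have h' : ∀ s, ∃ N : ℕ, ∀ n ≥ N, |W n s - L s| < ε := by
    intro s
    obtain ⟨N, hN⟩ := (Metric.tendsto_atTop.mp (htend s)) ε hε
    exact ⟨N, fun n hn => by simpa [Real.dist_eq] using hN n hn⟩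
  choose N hN using h'
  refine ⟨Finset.univ.sup N, fun k hk s => ?_⟩
  have hk1 : 1 ≤ k := by
    have := Finset.le_sup (f := N) (Finset.mem_univ s)
    omega
  have : V k s = W (k - 1) s := by
    simp only [hW]
    congr 1
    omega
  rw [this]
  apply hN s
  have := Finset.le_sup (f := N) (Finset.mem_univ s)
  omega
end

section
/- (Proposition 6, termination bound for thresholded value iteration.) Suppose that for every k ∈ ℕ and every s ∈ S, V^k s ∈ {0} ∪ [v_min, 1], and either V^{k+1} s = V^k s or V^{k+1} s > (1 + ε) · V^k s. Then for every K ∈ ℕ, the number of indices k < K with V^{k+1} ≠ V^k is at most n · (1 + log(1/v_min) / log(1 + ε)). In particular, the thresholded value-iteration algorithm reaches an iterate with V^{k+1} = V^k within n · (1 + log(1/v_min)/log(1+ε)) + 1 update steps. -/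
open Finset
open scoped Classical

/-- Proposition 6: termination bound for thresholded value iteration. If each
value is either `0` or in `[v_min, 1]`, and each update either leaves a state's
value unchanged or multiplies it by more than `(1 + ε)`, then at most
`n · (1 + log(1/v_min)/log(1+ε))` iterations can change the value vector, and the
algorithm reaches an iterate with `V^{k+1} = V^k` within
`n · (1 + log(1/v_min)/log(1+ε)) + 1` steps. -/
theorem thresholded_value_iteration_terminates
    {S : Type*} [Fintype S] [Nonempty S]
    (n : ℕ) (hn : Fintype.card S = n)
    (ε vmin : ℝ) (hε : 0 < ε) (hvmin : 0 < vmin) (hvmin1 : vmin ≤ 1)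
    (V : ℕ → S → ℝ)
    (hrange : ∀ k s, V k s = 0 ∨ (vmin ≤ V k s ∧ V k s ≤ 1))
    (hstep : ∀ k s, V (k + 1) s = V k s ∨ (1 + ε) * V k s < V (k + 1) s) :
    (∀ K : ℕ,
      (((Finset.range K).filter fun k => V (k + 1) ≠ V k).card : ℝ) ≤
        n * (1 + Real.log (1 / vmin) / Real.log (1 + ε))) ∧
    ∃ k : ℕ, (k : ℝ) ≤ n * (1 + Real.log (1 / vmin) / Real.log (1 + ε)) + 1 ∧
      V (k + 1) = V k := by
  have hlog : 0 < Real.log (1 + ε) := Real.log_pos (by linarith)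
  set M : ℝ := 1 + Real.log (1 / vmin) / Real.log (1 + ε) with hMdef
  have hlogv : 0 ≤ Real.log (1 / vmin) :=
    Real.log_nonneg (by rw [le_div_iff₀ hvmin]; linarith)
  have hM1 : 1 ≤ M := by
    have := div_nonneg hlogv hlog.le
    simp only [hMdef]; linarith
  have hnonneg : ∀ k s, 0 ≤ V k s := by
    intro k s
    rcases hrange k s with h | ⟨h1, _⟩ <;> linarith
  -- growth lemma
  have key : ∀ s K c, c = ((range K).filter fun k => V (k + 1) s ≠ V k s).card →
      1 ≤ c → vmin * (1 + ε) ^ (c - 1) ≤ V K s := by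
    intro s K
    induction K with
    | zero => intro c hc h1; simp at hc; omega
    | succ K ih =>
      intro c hc h1
      rw [Finset.range_add_one, Finset.filter_insert] at hc
      by_cases h : V (K + 1) s ≠ V K s
      · rw [if_pos h, Finset.card_insert_of_notMem (by simp)] at hc
        set d := ((range K).filter fun k => V (k + 1) s ≠ V k s).card with hd
        have hstep' := (hstep K s).resolve_left h
        rcases Nat.eq_zero_or_pos d with hd0 | hd1
        · have hpos : 0 < V (K + 1) s :=
            lt_of_le_of_lt (mul_nonneg (by linarith) (hnonneg K s)) hstep'
          rcases hrange (K + 1) s with h0 | ⟨hl, _⟩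
          · linarith
          · have : c - 1 = 0 := by omega
            rw [this]; simpa using hl
        · have hIH := ih d rfl hd1
          have hcd : c - 1 = d := by omega
          have hpow : (1 + ε) ^ d = (1 + ε) ^ (d - 1) * (1 + ε) := by
            rw [← pow_succ]; congr 1; omega
          rw [hcd, hpow]
          nlinarith [pow_pos (by linarith : (0:ℝ) < 1 + ε) (d - 1)]
      · rw [if_neg h] at hc
        have hV : V (K + 1) s = V K s := by push_neg at h; exact h
        rw [hV]; exact ih c hc h1
  -- per-state count bound
  have hstate : ∀ s K, ((((range K).filter fun k => V (k + 1) s ≠ V k s).card : ℝ)) ≤ M := by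
    intro s K
    set c := ((range K).filter fun k => V (k + 1) s ≠ V k s).card with hc
    rcases Nat.eq_zero_or_pos c with h0 | h1
    · rw [h0]; push_cast; linarith
    · have hgrow := key s K c rfl h1
      have hpowpos : (0:ℝ) < vmin * (1 + ε) ^ (c - 1) :=
        mul_pos hvmin (pow_pos (by linarith) _)
      have hle1 : V K s ≤ 1 := by
        rcases hrange K s with h | ⟨_, h⟩
        · linarith
        · exact h
      have hle : vmin * (1 + ε) ^ (c - 1) ≤ 1 := le_trans hgrow hle1
      have hlogle : Real.log vmin + (c - 1 : ℕ) * Real.log (1 + ε) ≤ 0 := by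
        have := Real.log_le_log hpowpos hle
        rwa [Real.log_mul (ne_of_gt hvmin) (by positivity), Real.log_pow,
          Real.log_one] at this
      have hinv : Real.log (1 / vmin) = -Real.log vmin := by
        rw [one_div, Real.log_inv]
      have hcast : ((c - 1 : ℕ) : ℝ) = (c : ℝ) - 1 := by
        push_cast [Nat.cast_sub h1]; ring
      rw [hcast] at hlogle
      have : ((c : ℝ) - 1) ≤ Real.log (1 / vmin) / Real.log (1 + ε) := by
        rw [le_div_iff₀ hlog, hinv]; linarith
      simp only [hMdef]; linarith
  have hbound : ∀ K : ℕ,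
      (((range K).filter fun k => V (k + 1) ≠ V k).card : ℝ) ≤ n * M := by
    intro K
    have hsub : ((range K).filter fun k => V (k + 1) ≠ V k) ⊆
        Finset.univ.biUnion (fun s : S => (range K).filter fun k => V (k + 1) s ≠ V k s) := by
      intro k hk
      simp only [mem_filter, mem_range] at hk
      obtain ⟨s, hs⟩ := Function.ne_iff.mp hk.2
      simp only [mem_biUnion, mem_univ, mem_filter, mem_range]
      exact ⟨s, trivial, hk.1, hs⟩
    calc (((range K).filter fun k => V (k + 1) ≠ V k).card : ℝ)
        ≤ ((Finset.univ.biUnion (fun s : S =>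
            (range K).filter fun k => V (k + 1) s ≠ V k s)).card : ℝ) := by
          exact_mod_cast Finset.card_le_card hsub
      _ ≤ ∑ s : S, ((((range K).filter fun k => V (k + 1) s ≠ V k s).card : ℝ)) := by
          exact_mod_cast Finset.card_biUnion_le
      _ ≤ ∑ _s : S, M := Finset.sum_le_sum fun s _ => hstate s K
      _ = n * M := by rw [Finset.sum_const, Finset.card_univ, hn, nsmul_eq_mul]
  refine ⟨hbound, ?_⟩
  have hB0 : (0:ℝ) ≤ n * M := by
    have : 1 ≤ n := by
      rw [← hn]; exact Fintype.card_pos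
    have : (1:ℝ) ≤ n := by exact_mod_cast this
    nlinarith
  set B : ℝ := n * M with hBdef
  by_contra hcon
  push_neg at hcon
  set K : ℕ := ⌊B⌋₊ + 2 with hK
  have hall : ∀ k ∈ range K, V (k + 1) ≠ V k := by
    intro k hk
    rw [mem_range] at hk
    have hk' : (k : ℝ) ≤ B + 1 := by
      have : k ≤ ⌊B⌋₊ + 1 := by omega
      have h2 : (k : ℝ) ≤ (⌊B⌋₊ : ℝ) + 1 := by exact_mod_cast this
      have := Nat.floor_le hB0
      linarith
    exact hcon k hk'
  have hfull : ((range K).filter fun k => V (k + 1) ≠ V k) = range K :=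
    Finset.filter_true_of_mem hall
  have hKB := hbound K
  rw [hfull, Finset.card_range] at hKB
  have hfl : B < (⌊B⌋₊ : ℝ) + 1 := Nat.lt_floor_add_one B
  have hKval : (K : ℝ) = (⌊B⌋₊ : ℝ) + 2 := by push_cast [hK]; ring
  linarith
end

section
/- (The limit of the monotone value iterates is a fixed point of the Bellman operator.) Let V0 : S → ℝ satisfy 0 ≤ V0 s ≤ 1 and V0 s ≤ (T V0) s for all s ∈ S. Then the iterates T^k V0 converge pointwise to some V* : S → ℝ with 0 ≤ V* s ≤ 1 for all s, and V* satisfies the fixed-point equation T V* = V*. -/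
/-!
The Bellman operator `T` is monotone and commutes with adding constants (rows of `P` and mixed
strategies are probability vectors), hence it is 1-Lipschitz for the sup norm and in particular
continuous. Starting below `T V0` and below the fixed point `1`, the iterates `T^k V0` increase,
stay below `1`, and so converge to their supremum, which by continuity is a fixed point of `T`.
-/

open Finset

open Filter Topology Function

namespace Monotone

variable {α : Type*} [ConditionallyCompleteLattice α] [TopologicalSpace α]
  [SupConvergenceClass α] [T2Space α] {f : α → α} {x u : α}

theorem exists_isFixedPt_tendsto_iterate (hf : Monotone f) (hcont : Continuous f)
    (hx : x ≤ f x) (hxu : x ≤ u) (hu : f u ≤ u) :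
    ∃ y, x ≤ y ∧ y ≤ u ∧ Tendsto (fun n => f^[n] x) atTop (𝓝 y) ∧ IsFixedPt f y := by
  have hle_u : ∀ n, f^[n] x ≤ u := fun n =>
    (hf.iterate n hxu).trans (hf.antitone_iterate_of_map_le hu n.zero_le)
  have hbdd : BddAbove (Set.range fun n => f^[n] x) := ⟨u, Set.forall_mem_range.2 hle_u⟩
  have hlim := tendsto_atTop_ciSup (hf.monotone_iterate_of_le_map hx) hbdd
  exact ⟨_, le_ciSup hbdd 0, ciSup_le hle_u, hlim,
    isFixedPt_of_tendsto_iterate hlim hcont.continuousAt⟩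

end Monotone

theorem lipschitzWith_one_of_monotone_of_map_add_const {ι : Type*} [Fintype ι]
    {T : (ι → ℝ) → (ι → ℝ)} (hmono : Monotone T)
    (hadd : ∀ V (c : ℝ), T (V + fun _ => c) = T V + fun _ => c) : LipschitzWith 1 T := by
  have map_le_map_add_dist : ∀ V W i, T V i ≤ T W i + dist V W := fun V W i => by
    have hle : V ≤ W + fun _ => dist V W := fun j => by
      have hj := dist_le_pi_dist V W j
      rw [Real.dist_eq] at hj
      exact le_add_of_sub_left_le ((le_abs_self _).trans hj)
    simpa only [hadd, Pi.add_apply] using hmono hle i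
  refine LipschitzWith.of_dist_le_mul fun V W => ?_
  rw [NNReal.coe_one, one_mul, dist_pi_le_iff dist_nonneg]
  intro i
  rw [Real.dist_eq, abs_sub_le_iff]
  constructor
  · linarith [map_le_map_add_dist V W i]
  · linarith [map_le_map_add_dist W V i, dist_comm V W]

theorem Mixed.nonempty {X : Type*} [Fintype X] [Nonempty X] : (Mixed X).Nonempty := by
  classical
  obtain ⟨x⟩ := ‹Nonempty X›
  exact ⟨Pi.single x 1, fun y => by by_cases h : y = x <;> simp [h], by simp⟩

instance {X : Type*} [Fintype X] [Nonempty X] : Nonempty (Mixed X) := Mixed.nonempty.to_subtype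

namespace Bellman

variable {S D A : Type*} [Fintype S] [Fintype D] [Fintype A]

def payoff (P : D → A → S → S → ℝ) (V : S → ℝ) (s : S) (μ : D → ℝ) (ν : A → ℝ) : ℝ :=
  ∑ d, ∑ a, ∑ s', μ d * ν a * P d a s s' * V s'

theorem bellmanT_apply (P : D → A → S → S → ℝ) (V : S → ℝ) (s : S) :
    bellmanT P V s = ⨆ μ : Mixed D, ⨅ ν : Mixed A, payoff P V s μ ν := rfl

theorem payoff_mono {P : D → A → S → S → ℝ} (hP0 : ∀ d a s s', 0 ≤ P d a s s')
    {V W : S → ℝ} (hVW : V ≤ W) (s : S) {μ : D → ℝ} {ν : A → ℝ} (hμ : 0 ≤ μ) (hν : 0 ≤ ν) :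
    payoff P V s μ ν ≤ payoff P W s μ ν :=
  Finset.sum_le_sum fun d _ => Finset.sum_le_sum fun a _ => Finset.sum_le_sum fun s' _ =>
    mul_le_mul_of_nonneg_left (hVW s') (mul_nonneg (mul_nonneg (hμ d) (hν a)) (hP0 d a s s'))

theorem payoff_add (P : D → A → S → S → ℝ) (V W : S → ℝ) (s : S) (μ : D → ℝ) (ν : A → ℝ) :
    payoff P (V + W) s μ ν = payoff P V s μ ν + payoff P W s μ ν := by
  simp only [payoff, Pi.add_apply, mul_add, Finset.sum_add_distrib]

theorem payoff_const {P : D → A → S → S → ℝ} (hP1 : ∀ d a s, ∑ s', P d a s s' = 1)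
    (c : ℝ) (s : S) {μ : D → ℝ} {ν : A → ℝ} (hμ : μ ∈ Mixed D) (hν : ν ∈ Mixed A) :
    payoff P (fun _ => c) s μ ν = c := by
  simp only [payoff, ← Finset.sum_mul, ← Finset.mul_sum, hP1, mul_one, hν.2, hμ.2, one_mul]

theorem bellmanT_const [Nonempty D] [Nonempty A] {P : D → A → S → S → ℝ}
    (hP1 : ∀ d a s, ∑ s', P d a s s' = 1) (c : ℝ) : bellmanT P (fun _ => c) = fun _ => c := by
  ext s
  simp only [bellmanT_apply, payoff_const hP1 c s (Subtype.prop _) (Subtype.prop _), ciInf_const,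
    ciSup_const]

variable {P : D → A → S → S → ℝ} (hP0 : ∀ d a s s', 0 ≤ P d a s s')
  (hP1 : ∀ d a s, ∑ s', P d a s s' = 1)
include hP0 hP1

theorem abs_payoff_le (V : S → ℝ) (s : S) {μ : D → ℝ} {ν : A → ℝ} (hμ : μ ∈ Mixed D)
    (hν : ν ∈ Mixed A) : |payoff P V s μ ν| ≤ ‖V‖ := by
  have hV : ∀ s', |V s'| ≤ ‖V‖ := fun s' =>
    (Real.norm_eq_abs _).symm.trans_le (norm_le_pi_norm V s')
  rw [abs_le]
  constructor
  · calc -‖V‖ = payoff P (fun _ => -‖V‖) s μ ν := (payoff_const hP1 _ s hμ hν).symm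
      _ ≤ payoff P V s μ ν := payoff_mono hP0 (fun s' => (abs_le.1 (hV s')).1) s hμ.1 hν.1
  · calc payoff P V s μ ν ≤ payoff P (fun _ => ‖V‖) s μ ν :=
          payoff_mono hP0 (fun s' => (abs_le.1 (hV s')).2) s hμ.1 hν.1
      _ = ‖V‖ := payoff_const hP1 _ s hμ hν

theorem bddBelow_range_payoff (V : S → ℝ) (s : S) {μ : D → ℝ} (hμ : μ ∈ Mixed D) :
    BddBelow (Set.range fun ν : Mixed A => payoff P V s μ ν) :=
  ⟨-‖V‖, Set.forall_mem_range.2 fun ν => (abs_le.1 (abs_payoff_le hP0 hP1 V s hμ ν.2)).1⟩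

theorem bddAbove_range_iInf_payoff [Nonempty A] (V : S → ℝ) (s : S) :
    BddAbove (Set.range fun μ : Mixed D => ⨅ ν : Mixed A, payoff P V s μ ν) := by
  obtain ⟨ν⟩ : Nonempty (Mixed A) := inferInstance
  exact ⟨‖V‖, Set.forall_mem_range.2 fun μ => ciInf_le_of_le
    (bddBelow_range_payoff hP0 hP1 V s μ.2) ν (abs_le.1 (abs_payoff_le hP0 hP1 V s μ.2 ν.2)).2⟩

theorem monotone_bellmanT [Nonempty A] : Monotone (bellmanT P) := fun V W hVW s =>
  ciSup_mono (bddAbove_range_iInf_payoff hP0 hP1 W s) fun μ =>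
    ciInf_mono (bddBelow_range_payoff hP0 hP1 V s μ.2) fun ν =>
      payoff_mono hP0 hVW s μ.2.1 ν.2.1

theorem bellmanT_add_const [Nonempty D] [Nonempty A] (V : S → ℝ) (c : ℝ) :
    bellmanT P (V + fun _ => c) = bellmanT P V + fun _ => c := by
  ext s
  have hpayoff : ∀ (μ : Mixed D) (ν : Mixed A),
      payoff P (V + fun _ => c) s μ ν = payoff P V s μ ν + c := fun μ ν => by
    rw [payoff_add, payoff_const hP1 c s μ.2 ν.2]
  simp only [bellmanT_apply, Pi.add_apply, hpayoff]
  calc ⨆ μ : Mixed D, ⨅ ν : Mixed A, (payoff P V s μ ν + c)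
      = ⨆ μ : Mixed D, ((⨅ ν : Mixed A, payoff P V s μ ν) + c) :=
        iSup_congr fun μ => (ciInf_add (bddBelow_range_payoff hP0 hP1 V s μ.2) c).symm
    _ = (⨆ μ : Mixed D, ⨅ ν : Mixed A, payoff P V s μ ν) + c :=
        (ciSup_add (bddAbove_range_iInf_payoff hP0 hP1 V s) c).symm

end Bellman

theorem bellman_iterates_limit_is_fixed_point_general
    {S D A : Type*} [Fintype S] [Fintype D] [Nonempty D]
    [Fintype A] [Nonempty A]
    (P : D → A → S → S → ℝ)
    (hP0 : ∀ d a s s', 0 ≤ P d a s s') (hP1 : ∀ d a s, ∑ s', P d a s s' = 1)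
    (V0 : S → ℝ) (hV0 : ∀ s, 0 ≤ V0 s ∧ V0 s ≤ 1)
    (hmono : ∀ s, V0 s ≤ bellmanT P V0 s) :
    ∃ Vstar : S → ℝ, (∀ s, 0 ≤ Vstar s ∧ Vstar s ≤ 1) ∧
      (∀ s, Filter.Tendsto (fun k => (bellmanT P)^[k] V0 s) Filter.atTop (nhds (Vstar s))) ∧
      bellmanT P Vstar = Vstar := by
  have hT := Bellman.monotone_bellmanT hP0 hP1
  have hcont : Continuous (bellmanT P) :=
    (lipschitzWith_one_of_monotone_of_map_add_const hT
      (Bellman.bellmanT_add_const hP0 hP1)).continuous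
  obtain ⟨Vstar, hV0_le_Vstar, hVstar_le_one, hlim, hfix⟩ :=
    hT.exists_isFixedPt_tendsto_iterate hcont hmono (fun s => (hV0 s).2)
      (Bellman.bellmanT_const hP1 1).le
  exact ⟨Vstar, fun s => ⟨(hV0 s).1.trans (hV0_le_Vstar s), hVstar_le_one s⟩,
    tendsto_pi_nhds.1 hlim, hfix⟩

/-- The limit of monotone value iterates is a fixed point of the Bellman operator. -/
theorem bellman_iterates_limit_is_fixed_point
    {S D A : Type*} [Fintype S] [Nonempty S] [Fintype D] [Nonempty D]
    [Fintype A] [Nonempty A]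
    (P : D → A → S → S → ℝ)
    (hP0 : ∀ d a s s', 0 ≤ P d a s s') (hP1 : ∀ d a s, ∑ s', P d a s s' = 1)
    (V0 : S → ℝ) (hV0 : ∀ s, 0 ≤ V0 s ∧ V0 s ≤ 1)
    (hmono : ∀ s, V0 s ≤ bellmanT P V0 s) :
    ∃ Vstar : S → ℝ, (∀ s, 0 ≤ Vstar s ∧ Vstar s ≤ 1) ∧
      (∀ s, Filter.Tendsto (fun k => (bellmanT P)^[k] V0 s) Filter.atTop (nhds (Vstar s))) ∧
      bellmanT P Vstar = Vstar :=
  bellman_iterates_limit_is_fixed_point_general P hP0 hP1 V0 hV0 hmono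
end

section
/- (Additivity of reach probabilities over disjoint closed sets, used in the proof of Theorem 1.) Let R_1, …, R_p ⊆ S be pairwise disjoint closed sets and let s0 ∈ S. Then μ_{s0}{ω : ω reaches R_1 ∪ ⋯ ∪ R_p} = ∑_{k=1}^{p} μ_{s0}{ω : ω reaches R_k}. -/
open MeasureTheory Finset Set
open scoped Classical

/-!
Every cylinder recording a step out of a closed set has a zero transition factor, so almost
surely a path that enters a closed set never leaves it. Hence almost no path reaches two disjoint
closed sets: the reach events are pairwise a.e. disjoint, and countable additivity gives the sum.
-/

lemma IsClosedSet.transition_eq_zero {S : Type*} [Fintype S] {P : S → S → ℝ}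
    (hP0 : ∀ s s', 0 ≤ P s s') (hP1 : ∀ s, ∑ s', P s s' = 1)
    {C : Set S} (hC : IsClosedSet P C) {s s' : S} (hs : s ∈ C) (hs' : s' ∉ C) :
    P s s' = 0 := by
  have hout : ∑ t ∈ univ.filter (· ∉ C), P s t = 0 := by
    have := sum_filter_add_sum_filter_not univ (· ∈ C) (P s)
    linarith [hC s hs, hP1 s]
  exact (sum_eq_zero_iff_of_nonneg fun t _ => hP0 s t).1 hout s' (by simp [hs'])

lemma measure_eq_zero_of_forall_cylinder_eq_zero {S : Type*} [Countable S]
    [MeasurableSpace S] {μ : Measure (ℕ → S)} {E : Set (ℕ → S)} (n : ℕ)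
    (h : ∀ ω ∈ E, μ {ω' | ∀ i ≤ n, ω' i = ω i} = 0) : μ E = 0 := by
  have hcover : E ⊆ ⋃ g : Fin (n + 1) → S, {ω ∈ E | ∀ i : Fin (n + 1), ω i = g i} :=
    fun ω hω => mem_iUnion.2 ⟨fun i => ω i, hω, fun _ => rfl⟩
  refine measure_mono_null hcover (measure_iUnion_null fun g => ?_)
  rcases eq_empty_or_nonempty {ω ∈ E | ∀ i : Fin (n + 1), ω i = g i} with hempty | ⟨ω, hωE, hωg⟩
  · simp [hempty]
  · refine measure_mono_null (fun ω' hω' => ?_) (h ω hωE)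
    intro i hi
    rw [hω'.2 ⟨i, by omega⟩, hωg ⟨i, by omega⟩]

namespace IsPathMeasure

variable {S : Type*} [Fintype S] [DecidableEq S] [MeasurableSpace S]
  {P : S → S → ℝ} {s0 : S} {μ : Measure (ℕ → S)}

lemma cylinder_eq_zero_of_transition_eq_zero (hμ : IsPathMeasure P s0 μ) {ω : ℕ → S}
    {k n : ℕ} (hkn : k < n) (hzero : P (ω k) (ω (k + 1)) = 0) :
    μ {ω' | ∀ i ≤ n, ω' i = ω i} = 0 := by
  rw [hμ n ω, prod_eq_zero (mem_range.2 hkn) hzero]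
  simp

lemma ae_stays_in_closed (hμ : IsPathMeasure P s0 μ)
    (hP0 : ∀ s s', 0 ≤ P s s') (hP1 : ∀ s, ∑ s', P s s' = 1)
    {C : Set S} (hC : IsClosedSet P C) :
    ∀ᵐ ω ∂μ, ∀ m n, m ≤ n → ω m ∈ C → ω n ∈ C := by
  have hstep : ∀ᵐ ω ∂μ, ∀ k, ω k ∈ C → ω (k + 1) ∈ C := by
    refine ae_all_iff.2 fun k => ae_iff.2 ?_
    refine measure_eq_zero_of_forall_cylinder_eq_zero (k + 1) fun ω hω => ?_
    push Not at hω
    exact hμ.cylinder_eq_zero_of_transition_eq_zero k.lt_succ_self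
      (hC.transition_eq_zero hP0 hP1 hω.1 hω.2)
  filter_upwards [hstep] with ω hω m n hmn hm
  induction n, hmn using Nat.le_induction with
  | base => exact hm
  | succ n _ ih => exact hω n ih

lemma aedisjoint_reach (hμ : IsPathMeasure P s0 μ)
    (hP0 : ∀ s s', 0 ≤ P s s') (hP1 : ∀ s, ∑ s', P s s' = 1)
    {C D : Set S} (hC : IsClosedSet P C) (hD : IsClosedSet P D) (hCD : Disjoint C D) :
    AEDisjoint μ {ω | ∃ n, ω n ∈ C} {ω | ∃ n, ω n ∈ D} := by
  refine measure_eq_zero_iff_ae_notMem.2 ?_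
  filter_upwards [hμ.ae_stays_in_closed hP0 hP1 hC, hμ.ae_stays_in_closed hP0 hP1 hD]
    with ω hωC hωD
  rintro ⟨⟨m, hm⟩, n, hn⟩
  rcases le_total m n with hmn | hnm
  · exact hCD.ne_of_mem (hωC m n hmn hm) hn rfl
  · exact hCD.ne_of_mem hm (hωD n m hnm hn) rfl

end IsPathMeasure

lemma measurableSet_reach {S : Type*} [Finite S] [MeasurableSpace S]
    [MeasurableSingletonClass S] (C : Set S) :
    MeasurableSet {ω : ℕ → S | ∃ n, ω n ∈ C} := by
  simp only [ofPred_exists]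
  exact MeasurableSet.iUnion fun n => measurable_pi_apply n C.toFinite.measurableSet

theorem reach_prob_additive_over_disjoint_closed_sets_general
    {S : Type*} [Fintype S] [DecidableEq S]
    [MeasurableSpace S] [MeasurableSingletonClass S]
    (P : S → S → ℝ) (hP0 : ∀ s s', 0 ≤ P s s') (hP1 : ∀ s, ∑ s', P s s' = 1)
    (p : ℕ) (R : Fin p → Set S)
    (hdisj : Pairwise fun i j => Disjoint (R i) (R j))
    (hclosed : ∀ i, IsClosedSet P (R i))
    (s0 : S) (μ : Measure (ℕ → S))
    (hμ : IsPathMeasure P s0 μ) :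
    μ {ω | ∃ n, ω n ∈ ⋃ i, R i} = ∑ i : Fin p, μ {ω | ∃ n, ω n ∈ R i} := by
  have hunion : {ω : ℕ → S | ∃ n, ω n ∈ ⋃ i, R i} = ⋃ i, {ω | ∃ n, ω n ∈ R i} := by
    ext ω
    simp only [mem_ofPred_eq, mem_iUnion]
    exact exists_comm
  rw [hunion, measure_iUnion₀ (fun i j hij => hμ.aedisjoint_reach hP0 hP1 (hclosed i)
    (hclosed j) (hdisj hij)) fun i => (measurableSet_reach (R i)).nullMeasurableSet,
    tsum_fintype]

/-- Additivity of reach probabilities over pairwise disjoint closed sets. -/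
theorem reach_prob_additive_over_disjoint_closed_sets
    {S : Type*} [Fintype S] [Nonempty S] [DecidableEq S]
    [MeasurableSpace S] [MeasurableSingletonClass S]
    (P : S → S → ℝ) (hP0 : ∀ s s', 0 ≤ P s s') (hP1 : ∀ s, ∑ s', P s s' = 1)
    (p : ℕ) (R : Fin p → Set S)
    (hdisj : Pairwise fun i j => Disjoint (R i) (R j))
    (hclosed : ∀ i, IsClosedSet P (R i))
    (s0 : S) (μ : Measure (ℕ → S)) [IsProbabilityMeasure μ]
    (hμ : IsPathMeasure P s0 μ) :
    μ {ω | ∃ n, ω n ∈ ⋃ i, R i} = ∑ i : Fin p, μ {ω | ∃ n, ω n ∈ R i} :=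
  reach_prob_additive_over_disjoint_closed_sets_general P hP0 hP1 p R hdisj hclosed s0 μ hμ
end

section
/- (Propagation of infinite visitation along positive-probability transitions.) Let s, s' ∈ S with P s s' > 0, and let s0 ∈ S. Then for μ_{s0}-almost every trajectory ω, if ω visits {s} infinitely often then ω visits {s'} infinitely often. -/
open MeasureTheory Finset Set
open scoped Classical

/-!
Consider the visits to `s` at times `≥ N`. By the cylinder formula, given the path up to a
visit, the next state is `s'` with probability `P s s'`; hence the probability that the first
`k` such visits are all followed by a state other than `s'` is at most `(1 - P s s') ^ k`, which
tends to `0`. So almost surely, for every `N`, some visit to `s` after time `N` is followed by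
`s'` whenever `s` is visited infinitely often.
-/

section DependsOn

variable {ι : Type*} [Preorder ι] [LocallyFiniteOrderBot ι] {X : ι → Type*}

theorem preimage_frestrictLe_image_eq {A : Set (Π i, X i)} {j : ι}
    (hA : DependsOn (· ∈ A) (Set.Iic j)) :
    Preorder.frestrictLe j ⁻¹' (Preorder.frestrictLe j '' A) = A := by
  refine Subset.antisymm ?_ (subset_preimage_image _ _)
  rintro ω ⟨ω', hω', heq⟩
  exact (hA fun i hi => congrFun heq ⟨i, Finset.mem_Iic.2 hi⟩).mp hω'

theorem measurableSet_of_dependsOn_Iic [∀ i, MeasurableSpace (X i)] [∀ i, Finite (X i)]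
    [∀ i, MeasurableSingletonClass (X i)] {A : Set (Π i, X i)} {j : ι}
    (hA : DependsOn (· ∈ A) (Set.Iic j)) : MeasurableSet A := by
  rw [← preimage_frestrictLe_image_eq hA]
  exact Preorder.measurable_frestrictLe j (Set.toFinite _).measurableSet

end DependsOn

namespace IsPathMeasure

variable {S : Type*} [Fintype S] [DecidableEq S] [MeasurableSpace S]
  {P : S → S → ℝ} {s0 : S} {μ : Measure (ℕ → S)}

theorem measure_cylinder_inter_eq (hμ : IsPathMeasure P s0 μ) (j : ℕ) (f : ℕ → S) (t : S) :
    μ ({ω : ℕ → S | ∀ i ≤ j, ω i = f i} ∩ {ω | ω (j + 1) = t}) =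
      ENNReal.ofReal (P (f j) t) * μ {ω | ∀ i ≤ j, ω i = f i} := by
  by_cases hnull : μ {ω | ∀ i ≤ j, ω i = f i} = 0
  · rw [hnull, mul_zero]
    exact measure_mono_null Set.inter_subset_left hnull
  have hcyl : {ω : ℕ → S | ∀ i ≤ j, ω i = f i} ∩ {ω | ω (j + 1) = t} =
      {ω | ∀ i ≤ j + 1, ω i = Function.update f (j + 1) t i} := by
    ext ω
    simp only [mem_inter_iff, mem_ofPred_eq, Nat.le_succ_iff (n := j), or_imp, forall_and,
      forall_eq, Function.update_self]
    refine and_congr_left fun _ => forall₂_congr fun i hi => ?_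
    rw [Function.update_of_ne (by omega)]
  have hprod : ∏ i ∈ range (j + 1), P (Function.update f (j + 1) t i)
      (Function.update f (j + 1) t (i + 1)) = (∏ i ∈ range j, P (f i) (f (i + 1))) * P (f j) t := by
    rw [prod_range_succ, Function.update_self, Function.update_of_ne (by omega)]
    congr 1
    refine prod_congr rfl fun i hi => ?_
    rw [Finset.mem_range] at hi
    rw [Function.update_of_ne (by omega), Function.update_of_ne (by omega)]
  rw [hμ] at hnull ⊢
  rw [hcyl, hμ, Function.update_of_ne (by omega), hprod]
  split_ifs at hnull ⊢
  · -- a cylinder of positive mass has a nonnegative weight, so `ofReal` splits the product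
    rw [ENNReal.ofReal_mul (by by_contra! h; exact hnull (ENNReal.ofReal_of_nonpos h.le)),
      mul_comm]
  · exact absurd rfl hnull

variable [MeasurableSingletonClass S] {A : Set (ℕ → S)} {j : ℕ} {s : S}

theorem measure_inter_coord_succ_eq (hμ : IsPathMeasure P s0 μ)
    (hA : DependsOn (· ∈ A) (Set.Iic j)) (hAs : ∀ ω ∈ A, ω j = s) (t : S) :
    μ (A ∩ {ω | ω (j + 1) = t}) = ENNReal.ofReal (P s t) * μ A := by
  -- `A` is the finite disjoint union of the fibres of `π`, which are cylinders
  set π := Preorder.frestrictLe (π := fun _ : ℕ => S) j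
  have hfiber : ∀ ω ∈ A, π ⁻¹' {π ω} = {ω' | ∀ i ≤ j, ω' i = ω i} := fun ω _ => by
    ext ω'
    simp [π, funext_iff]
  have hfiber_meas : ∀ x, MeasurableSet (π ⁻¹' {x}) := fun x =>
    Preorder.measurable_frestrictLe j (measurableSet_singleton x)
  have hfiber_eq : ∀ x ∈ (Set.toFinite (π '' A)).toFinset,
      μ.restrict {ω | ω (j + 1) = t} (π ⁻¹' {x}) = ENNReal.ofReal (P s t) * μ (π ⁻¹' {x}) := by
    intro x hx
    obtain ⟨ω, hω, rfl⟩ := (Set.Finite.mem_toFinset _).1 hx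
    rw [Measure.restrict_apply (hfiber_meas _), hfiber ω hω, hμ.measure_cylinder_inter_eq,
      hAs ω hω]
  rw [← Measure.restrict_apply (measurableSet_of_dependsOn_Iic hA),
    ← preimage_frestrictLe_image_eq hA, ← (Set.toFinite (π '' A)).coe_toFinset,
    ← sum_measure_preimage_singleton _ fun x _ => hfiber_meas x,
    ← sum_measure_preimage_singleton _ fun x _ => hfiber_meas x, Finset.mul_sum]
  exact Finset.sum_congr rfl hfiber_eq

theorem measure_inter_coord_succ_ne [IsFiniteMeasure μ] (hμ : IsPathMeasure P s0 μ)
    (hA : DependsOn (· ∈ A) (Set.Iic j)) (hAs : ∀ ω ∈ A, ω j = s) (t : S) :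
    μ (A ∩ {ω | ω (j + 1) ≠ t}) = (1 - ENNReal.ofReal (P s t)) * μ A := by
  have hdiff : A ∩ {ω | ω (j + 1) ≠ t} = A \ (A ∩ {ω | ω (j + 1) = t}) := by
    ext ω; simp
  have hmeas : MeasurableSet (A ∩ {ω | ω (j + 1) = t}) :=
    (measurableSet_of_dependsOn_Iic hA).inter
      (measurableSet_singleton t |>.preimage (measurable_pi_apply (j + 1)))
  rw [hdiff, measure_sdiff Set.inter_subset_left hmeas.nullMeasurableSet (measure_ne_top _ _),
    hμ.measure_inter_coord_succ_eq hA hAs, ENNReal.sub_mul fun _ _ => measure_ne_top μ A,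
    one_mul]

end IsPathMeasure

section MissStreak

variable {S : Type*}

def IsVisitAfter (N : ℕ) (s : S) (ω : ℕ → S) (n : ℕ) : Prop := N ≤ n ∧ ω n = s

/-- The visit to `s` at time `j` is the `k`-th one (counting from `0`) at a time `≥ N`, and none
of the earlier ones is followed by `s'`. -/
def missStreakAt (s s' : S) (N k j : ℕ) : Set (ℕ → S) :=
  {ω | IsVisitAfter N s ω j ∧ Nat.count (IsVisitAfter N s ω) j = k ∧
    ∀ n < j, IsVisitAfter N s ω n → ω (n + 1) ≠ s'}

variable {s s' : S} {N k : ℕ}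

theorem dependsOn_missStreakAt (j : ℕ) :
    DependsOn (· ∈ missStreakAt s s' N k j) (Set.Iic j) := by
  intro ω ω' h
  have hvisit : ∀ n ≤ j, IsVisitAfter N s ω n ↔ IsVisitAfter N s ω' n := fun n hn => by
    rw [IsVisitAfter, IsVisitAfter, h n hn]
  have hcount : Nat.count (IsVisitAfter N s ω) j = Nat.count (IsVisitAfter N s ω') j := by
    simp_rw [Nat.count_eq_card_filter_range]
    exact congrArg _ (Finset.filter_congr fun n hn => hvisit n (Finset.mem_range.1 hn).le)
  simp only [missStreakAt, mem_ofPred_eq, hcount, hvisit j le_rfl]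
  exact propext <| and_congr_right' <| and_congr_right' <| forall₂_congr fun n hn => by
    rw [hvisit n hn.le, h (n + 1) hn]

theorem pairwise_disjoint_missStreakAt :
    Pairwise (Function.onFun Disjoint (missStreakAt s s' N k)) := by
  intro j₁ j₂ hne
  refine Set.disjoint_left.2 fun ω h₁ h₂ => hne ?_
  exact Nat.count_injective h₁.1 h₂.1 (h₁.2.1.trans h₂.2.1.symm)

theorem iUnion_missStreakAt_succ_subset :
    ⋃ j, missStreakAt s s' N (k + 1) j ⊆
      ⋃ j, missStreakAt s s' N k j ∩ {ω | ω (j + 1) ≠ s'} := by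
  simp only [iUnion_subset_iff]
  rintro j ω ⟨-, hcount, hmiss⟩
  have hlt : k < Nat.count (IsVisitAfter N s ω) j := hcount ▸ k.lt_succ_self
  have hcard : ∀ hf : (Set.ofPred (IsVisitAfter N s ω)).Finite, k < #hf.toFinset :=
    fun hf => hlt.trans_le (Nat.count_le_card hf j)
  have hj := Nat.nth_lt_of_lt_count hlt
  exact mem_iUnion.2 ⟨Nat.nth (IsVisitAfter N s ω) k, ⟨Nat.nth_mem k hcard, Nat.count_nth hcard,
    fun n hn => hmiss n (hn.trans hj)⟩, hmiss _ hj (Nat.nth_mem k hcard)⟩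

theorem mem_iInter_iUnion_missStreakAt {ω : ℕ → S} (hs : {n | ω n = s}.Infinite)
    (hs' : ∀ n, N < n → ω n ≠ s') : ω ∈ ⋂ k, ⋃ j, missStreakAt s s' N k j := by
  have hinf : (Set.ofPred (IsVisitAfter N s ω)).Infinite :=
    (hs.sdiff (Set.finite_Iio N)).mono fun n hn => ⟨not_lt.1 hn.2, hn.1⟩
  exact mem_iInter.2 fun k => mem_iUnion.2 ⟨Nat.nth (IsVisitAfter N s ω) k,
    Nat.nth_mem_of_infinite hinf k, Nat.count_nth_of_infinite hinf k,
    fun n _ hn => hs' (n + 1) (Nat.lt_succ_of_le hn.1)⟩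

end MissStreak

namespace IsPathMeasure

variable {S : Type*} [Fintype S] [DecidableEq S] [MeasurableSpace S] [MeasurableSingletonClass S]
  {P : S → S → ℝ} {s0 : S} {μ : Measure (ℕ → S)} {s s' : S} {N : ℕ}

theorem measure_iUnion_missStreakAt_succ_le [IsFiniteMeasure μ] (hμ : IsPathMeasure P s0 μ)
    (k : ℕ) : μ (⋃ j, missStreakAt s s' N (k + 1) j) ≤
      (1 - ENNReal.ofReal (P s s')) * μ (⋃ j, missStreakAt s s' N k j) := by
  have hmeas : ∀ j, MeasurableSet (missStreakAt s s' N k j) := fun j =>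
    measurableSet_of_dependsOn_Iic (dependsOn_missStreakAt j)
  have hmeas' : ∀ j, MeasurableSet (missStreakAt s s' N k j ∩ {ω | ω (j + 1) ≠ s'}) := fun j =>
    (hmeas j).inter (measurableSet_singleton s' |>.compl.preimage (measurable_pi_apply (j + 1)))
  calc μ (⋃ j, missStreakAt s s' N (k + 1) j)
      ≤ μ (⋃ j, missStreakAt s s' N k j ∩ {ω | ω (j + 1) ≠ s'}) :=
        measure_mono iUnion_missStreakAt_succ_subset
    _ = ∑' j, (1 - ENNReal.ofReal (P s s')) * μ (missStreakAt s s' N k j) := by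
        rw [measure_iUnion (fun i j hij => (pairwise_disjoint_missStreakAt hij).mono
          Set.inter_subset_left Set.inter_subset_left) hmeas']
        exact tsum_congr fun j =>
          hμ.measure_inter_coord_succ_ne (dependsOn_missStreakAt j) (fun ω hω => hω.1.2) s'
    _ = (1 - ENNReal.ofReal (P s s')) * μ (⋃ j, missStreakAt s s' N k j) := by
        rw [ENNReal.tsum_mul_left, measure_iUnion pairwise_disjoint_missStreakAt hmeas]

theorem measure_iUnion_missStreakAt_le [IsProbabilityMeasure μ] (hμ : IsPathMeasure P s0 μ)
    (k : ℕ) : μ (⋃ j, missStreakAt s s' N k j) ≤ (1 - ENNReal.ofReal (P s s')) ^ k := by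
  induction k with
  | zero => simpa using prob_le_one
  | succ k ih =>
    calc μ (⋃ j, missStreakAt s s' N (k + 1) j)
        ≤ (1 - ENNReal.ofReal (P s s')) * μ (⋃ j, missStreakAt s s' N k j) :=
          hμ.measure_iUnion_missStreakAt_succ_le k
      _ ≤ (1 - ENNReal.ofReal (P s s')) ^ (k + 1) := by
          rw [pow_succ']
          gcongr

theorem measure_iInter_iUnion_missStreakAt [IsProbabilityMeasure μ] (hμ : IsPathMeasure P s0 μ)
    (hpos : 0 < P s s') : μ (⋂ k, ⋃ j, missStreakAt s s' N k j) = 0 := by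
  have hq : 1 - ENNReal.ofReal (P s s') < 1 :=
    ENNReal.sub_lt_self ENNReal.one_ne_top one_ne_zero (ENNReal.ofReal_pos.2 hpos).ne'
  refine le_antisymm (ge_of_tendsto' (ENNReal.tendsto_pow_atTop_nhds_zero_of_lt_one hq)
    fun k => ?_) zero_le
  exact (measure_mono (iInter_subset _ k)).trans (hμ.measure_iUnion_missStreakAt_le k)

end IsPathMeasure

theorem infinitely_often_propagates_general
    {S : Type*} [Fintype S] [DecidableEq S]
    [MeasurableSpace S] [MeasurableSingletonClass S]
    (P : S → S → ℝ)
    (s s' : S) (hpos : 0 < P s s')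
    (s0 : S) (μ : Measure (ℕ → S)) [IsProbabilityMeasure μ]
    (hμ : IsPathMeasure P s0 μ) :
    ∀ᵐ ω ∂μ, {n | ω n = s}.Infinite → {n | ω n = s'}.Infinite := by
  rw [ae_iff]
  refine measure_mono_null (fun ω hω => ?_)
    (measure_iUnion_null fun N => hμ.measure_iInter_iUnion_missStreakAt (N := N) hpos)
  obtain ⟨hs, hs'⟩ := Classical.not_imp.1 hω
  obtain ⟨N, hN⟩ := (Set.not_infinite.1 hs').bddAbove
  exact mem_iUnion.2 ⟨N, mem_iInter_iUnion_missStreakAt hs fun n hn h => hn.not_ge (hN h)⟩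

/-- Propagation of infinite visitation along a positive-probability transition:
almost surely, if `s` is visited infinitely often then so is `s'`. -/
theorem infinitely_often_propagates
    {S : Type*} [Fintype S] [Nonempty S] [DecidableEq S]
    [MeasurableSpace S] [MeasurableSingletonClass S]
    (P : S → S → ℝ) (hP0 : ∀ s s', 0 ≤ P s s') (hP1 : ∀ s, ∑ s', P s s' = 1)
    (s s' : S) (hpos : 0 < P s s')
    (s0 : S) (μ : Measure (ℕ → S)) [IsProbabilityMeasure μ]
    (hμ : IsPathMeasure P s0 μ) :
    ∀ᵐ ω ∂μ, {n | ω n = s}.Infinite → {n | ω n = s'}.Infinite :=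
  infinitely_often_propagates_general P s s' hpos s0 μ hμ
end
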